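/- arXiv:1204.4605 — 4 statements merged into one kernel-verified Lean document; each statement's English description precedes it below -/
import Mathlib

section
/- For every positive integer Q and every real number α, |∏_{r=0}^{2Q−1} (1 − e^{2πiα·2^r})| ≤ (2/√3) · 2^{2Qλ}, where λ = ln 3 / ln 4. -/
/-!
Writing `θ = πα`, the `r`-th factor has modulus `2 |sin (2^r θ)|`. Such a factor is at most `√3`
unless `|cos θ| ≤ 1/2`, and in that case the pair of factors at `θ` and `2θ` has product
`8 |cos θ| (1 - cos² θ) ≤ 3`. Peeling off one or two factors at a time therefore gives
`∏_{r < n} 2 |sin (2^r θ)| ≤ (2/√3) · √3^n`, and `√3^(2Q) = 3^Q = 2^(2Qλ)`.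
-/

open Real Finset

theorem prod_range_succ_pow_mul {R M : Type*} [Monoid R] [CommMonoid M] (f : R → M) (a x : R)
    (n : ℕ) :
    ∏ r ∈ range (n + 1), f (a ^ r * x) = f x * ∏ r ∈ range n, f (a ^ r * (a * x)) := by
  rw [prod_range_succ', pow_zero, one_mul, mul_comm]
  simp only [pow_succ, mul_assoc]

theorem abs_sin_mul_abs_sin_two_mul_le {θ : ℝ} (h : |cos θ| ≤ 1 / 2) :
    2 * |sin θ| * (2 * |sin (2 * θ)|) ≤ 3 := by
  have hpyth : |sin θ| ^ 2 + |cos θ| ^ 2 = 1 := by rw [sq_abs, sq_abs, sin_sq_add_cos_sq]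
  have hprod : 2 * |sin θ| * (2 * |sin (2 * θ)|) = 8 * |cos θ| * |sin θ| ^ 2 := by
    rw [sin_two_mul, abs_mul, abs_mul, abs_two]
    ring
  -- `3 - 8c(1 - c²) = (1 - 2c)(3 - 2c - 4c²)`, and both factors are nonnegative for `c ≤ 1/2`.
  rw [hprod]
  nlinarith [mul_nonneg (by linarith : 0 ≤ 1 - 2 * |cos θ|)
    (by nlinarith : 0 ≤ 3 - 2 * |cos θ| - 4 * |cos θ| ^ 2)]

theorem two_mul_abs_sin_le_sqrt_three {θ : ℝ} (h : 1 / 2 < |cos θ|) : 2 * |sin θ| ≤ √3 := by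
  have hpyth : |sin θ| ^ 2 + |cos θ| ^ 2 = 1 := by rw [sq_abs, sq_abs, sin_sq_add_cos_sq]
  apply Real.le_sqrt_of_sq_le
  nlinarith

theorem prod_two_mul_abs_sin_two_pow_mul_le (n : ℕ) (θ : ℝ) :
    ∏ r ∈ range n, 2 * |sin (2 ^ r * θ)| ≤ 2 / √3 * √3 ^ n := by
  have hsqrt3 : 0 < √3 := by positivity
  have hsqrt3_sq : √3 ^ 2 = 3 := sq_sqrt (by norm_num)
  have peel (m : ℕ) (x : ℝ) : ∏ r ∈ range (m + 1), 2 * |sin (2 ^ r * x)| =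
      2 * |sin x| * ∏ r ∈ range m, 2 * |sin (2 ^ r * (2 * x))| :=
    prod_range_succ_pow_mul (fun t => 2 * |sin t|) 2 x m
  induction n using Nat.twoStepInduction generalizing θ with
  | zero =>
    rw [prod_range_zero, pow_zero, mul_one, le_div_iff₀ hsqrt3, one_mul]
    nlinarith
  | one =>
    rw [prod_range_one, pow_zero, one_mul, pow_one, div_mul_cancel₀ _ hsqrt3.ne']
    linarith [abs_sin_le_one θ]
  | more n ih₀ ih₁ =>
    rw [peel (n + 1)]
    rcases le_or_gt |cos θ| (1 / 2) with hcos | hcos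
    · rw [peel n, ← mul_assoc, ← mul_assoc 2 (2 : ℝ) θ]
      calc 2 * |sin θ| * (2 * |sin (2 * θ)|) * ∏ r ∈ range n, 2 * |sin (2 ^ r * (2 * 2 * θ))|
          ≤ 3 * (2 / √3 * √3 ^ n) :=
            mul_le_mul (abs_sin_mul_abs_sin_two_mul_le hcos) (ih₀ _)
              (prod_nonneg fun _ _ => by positivity) (by norm_num)
        _ = 2 / √3 * √3 ^ (n + 2) := by rw [pow_add, hsqrt3_sq]; ring
    · calc 2 * |sin θ| * ∏ r ∈ range (n + 1), 2 * |sin (2 ^ r * (2 * θ))|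
          ≤ √3 * (2 / √3 * √3 ^ (n + 1)) :=
            mul_le_mul (two_mul_abs_sin_le_sqrt_three hcos) (ih₁ _)
              (prod_nonneg fun _ _ => by positivity) hsqrt3.le
        _ = 2 / √3 * √3 ^ (n + 2) := by ring

theorem norm_one_sub_exp_two_mul_mul_I (x : ℝ) :
    ‖1 - Complex.exp (2 * x * Complex.I)‖ = 2 * |sin x| := by
  have h := Complex.norm_exp_I_mul_ofReal_sub_one (2 * x)
  rw [norm_sub_rev, Complex.ofReal_mul, Complex.ofReal_ofNat, mul_comm Complex.I] at h
  rw [h, mul_div_cancel_left₀ x two_ne_zero, Real.norm_eq_abs, abs_mul, abs_two]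

theorem two_rpow_mul_log_three_div_log_four (x : ℝ) : (2 : ℝ) ^ (x * (log 3 / log 4)) = √3 ^ x := by
  have hlog4 : log 4 = 2 * log 2 := by
    rw [show (4 : ℝ) = 2 ^ 2 by norm_num, log_pow, Nat.cast_ofNat]
  have hlog_sqrt3 : log √3 = log 3 / 2 := log_sqrt (by norm_num)
  rw [rpow_def_of_pos two_pos, rpow_def_of_pos (by positivity), hlog4, hlog_sqrt3]
  field_simp

theorem gelfond_product_bound_general (Q : ℕ) (α : ℝ) :
    ‖∏ r ∈ Finset.range (2 * Q), (1 - Complex.exp (2 * Real.pi * Complex.I * α * 2 ^ r))‖ ≤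
      2 / Real.sqrt 3 * (2 : ℝ) ^ ((2 * Q : ℝ) * (Real.log 3 / Real.log 4)) := by
  have hfactor (r : ℕ) : ‖1 - Complex.exp (2 * Real.pi * Complex.I * α * 2 ^ r)‖ =
      2 * |sin (2 ^ r * (π * α))| := by
    rw [← norm_one_sub_exp_two_mul_mul_I]
    push_cast
    ring_nf
  rw [norm_prod, prod_congr rfl fun r _ => hfactor r, two_rpow_mul_log_three_div_log_four,
    show (2 * Q : ℝ) = ((2 * Q : ℕ) : ℝ) by push_cast; rfl, rpow_natCast]
  exact prod_two_mul_abs_sin_two_pow_mul_le (2 * Q) (π * α)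

theorem gelfond_product_bound (Q : ℕ) (hQ : 1 ≤ Q) (α : ℝ) :
    ‖∏ r ∈ Finset.range (2 * Q), (1 - Complex.exp (2 * Real.pi * Complex.I * α * 2 ^ r))‖ ≤
      2 / Real.sqrt 3 * (2 : ℝ) ^ ((2 * Q : ℝ) * (Real.log 3 / Real.log 4)) :=
  gelfond_product_bound_general Q α
end

section
/- There is an absolute constant C > 0 such that for every real number α and every real X ≥ 2, |∑_{n ≤ X} ε(n) e^{2πiαn}| ≤ C · X^λ · ln X, where λ = ln 3 / ln 4 and the sum is over natural numbers n with 1 ≤ n ≤ X. -/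
/-!
With `P_N(z) = ∑_{n<N} ε(n) zⁿ`, the digit recursion of `ε` gives `P_{2M}(z) = (1 - z) P_M(z²)`,
hence `P_{2^j}(z) = ∏_{i<j} (1 - z^{2^i})`, and peeling off the binary digits of `N ≤ 2^k` one at
a time gives `|P_N(z)| ≤ ∑_{j≤k} |P_{2^j}(z)|` on the closed unit disc.
On the unit circle `|1 - w|² |1 - w²| ≤ 3√3`, so grouping the cubes of the factors of
`P_{2^j}` into such consecutive pairs yields `|P_{2^j}(z)| ≤ 2 · 3^{j/2}`.
Summing the geometric series, `|P_N(z)| ≤ 6 · 3^{k/2} = 6 (2^k)^λ` for `N ≤ 2^k`; take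
`z = e^{2πiα}` and `N = ⌊X⌋ + 1 ≤ 2^{k+1}` with `2^k ≤ X`.
-/

/-- `eps n = 1` if the binary digit sum of `n` is even, and `-1` otherwise. -/
noncomputable def eps (n : ℕ) : ℂ :=
  if Even ((Nat.digits 2 n).sum) then 1 else -1

open Finset Real

@[simp] lemma eps_zero : eps 0 = 1 := by simp [eps]

lemma norm_eps (n : ℕ) : ‖eps n‖ = 1 := by
  unfold eps; split_ifs <;> simp

lemma eps_two_mul (n : ℕ) : eps (2 * n) = eps n := by
  rcases n.eq_zero_or_pos with rfl | hn
  · rfl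
  · have := Nat.digits_add 2 one_lt_two 0 n two_pos (.inr hn.ne')
    simp_all [eps]

lemma eps_two_mul_add_one (n : ℕ) : eps (2 * n + 1) = -eps n := by
  have := Nat.digits_add 2 one_lt_two 1 n one_lt_two (.inl one_ne_zero)
  rw [add_comm] at this
  unfold eps
  rw [this, List.sum_cons]
  split_ifs with h₁ h₂ <;> simp_all [Nat.even_add_one, parity_simps]

noncomputable def thueMorsePoly (N : ℕ) (z : ℂ) : ℂ :=
  ∑ n ∈ range N, eps n * z ^ n

lemma thueMorsePoly_succ (N : ℕ) (z : ℂ) :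
    thueMorsePoly (N + 1) z = thueMorsePoly N z + eps N * z ^ N :=
  sum_range_succ _ _

lemma thueMorsePoly_one (z : ℂ) : thueMorsePoly 1 z = 1 := by
  simp [thueMorsePoly]

lemma thueMorsePoly_two_mul (M : ℕ) (z : ℂ) :
    thueMorsePoly (2 * M) z = (1 - z) * thueMorsePoly M (z ^ 2) := by
  induction M with
  | zero => simp [thueMorsePoly]
  | succ M ih =>
    rw [mul_add_one, thueMorsePoly_succ, thueMorsePoly_succ, ih, thueMorsePoly_succ,
      eps_two_mul_add_one, eps_two_mul, ← pow_mul]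
    ring

lemma thueMorsePoly_two_pow (j : ℕ) (z : ℂ) :
    thueMorsePoly (2 ^ j) z = ∏ i ∈ range j, (1 - z ^ 2 ^ i) := by
  induction j generalizing z with
  | zero => simp [thueMorsePoly_one]
  | succ j ih =>
    rw [pow_succ', thueMorsePoly_two_mul, ih, prod_range_succ']
    simp only [← pow_mul, ← pow_succ', pow_zero, pow_one]
    ring

lemma norm_thueMorsePoly_succ_le {z : ℂ} (hz : ‖z‖ ≤ 1) (N : ℕ) :
    ‖thueMorsePoly (N + 1) z‖ ≤ ‖thueMorsePoly N z‖ + 1 := by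
  rw [thueMorsePoly_succ]
  refine (norm_add_le _ _).trans (add_le_add_right ?_ _)
  rw [norm_mul, norm_eps, one_mul, norm_pow]
  exact pow_le_one₀ (norm_nonneg z) hz

lemma norm_thueMorsePoly_le_sum {z : ℂ} (hz : ‖z‖ ≤ 1) {N k : ℕ} (hN : N ≤ 2 ^ k) :
    ‖thueMorsePoly N z‖ ≤ ∑ j ∈ range (k + 1), ‖thueMorsePoly (2 ^ j) z‖ := by
  induction k generalizing N z with
  | zero =>
    interval_cases N <;> simp [thueMorsePoly]
  | succ k ih =>
    have hz2 : ‖z ^ 2‖ ≤ 1 := by rw [norm_pow]; exact pow_le_one₀ (norm_nonneg z) hz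
    have h_even : ‖thueMorsePoly (2 * (N / 2)) z‖ ≤
        ∑ j ∈ range (k + 1), ‖thueMorsePoly (2 ^ (j + 1)) z‖ := by
      have hpow (j : ℕ) : 2 ^ (j + 1) = 2 * 2 ^ j := pow_succ' 2 j
      simp only [hpow, thueMorsePoly_two_mul, norm_mul, ← mul_sum]
      exact mul_le_mul_of_nonneg_left (ih hz2 (by omega)) (norm_nonneg _)
    have h_parity : ‖thueMorsePoly N z‖ ≤ ‖thueMorsePoly (2 * (N / 2)) z‖ + 1 := by
      rcases Nat.even_or_odd' N with ⟨M, rfl | rfl⟩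
      · simp
      · simpa [Nat.mul_add_div] using norm_thueMorsePoly_succ_le hz (2 * M)
    rw [sum_range_succ', pow_zero, thueMorsePoly_one, norm_one]
    linarith

lemma prod_cube_le_of_sq_mul_succ_le {a : ℕ → ℝ} {c : ℝ} (ha₀ : ∀ i, 0 ≤ a i) (ha₂ : ∀ i, a i ≤ 2)
    (hc : ∀ i, a i ^ 2 * a (i + 1) ≤ c) (j : ℕ) :
    (∏ i ∈ range (j + 1), a i) ^ 3 ≤ 2 * c ^ j * a j ^ 2 := by
  induction j with
  | zero =>
    rw [prod_range_one, pow_zero, mul_one]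
    nlinarith [mul_nonneg (sq_nonneg (a 0)) (sub_nonneg.2 (ha₂ 0))]
  | succ j ih =>
    have hc₀ : 0 ≤ c := (mul_nonneg (sq_nonneg _) (ha₀ 1)).trans (hc 0)
    calc (∏ i ∈ range (j + 2), a i) ^ 3
        = (∏ i ∈ range (j + 1), a i) ^ 3 * a (j + 1) ^ 3 := by rw [prod_range_succ, mul_pow]
      _ ≤ 2 * c ^ j * a j ^ 2 * a (j + 1) ^ 3 :=
          mul_le_mul_of_nonneg_right ih (pow_nonneg (ha₀ _) 3)
      _ = 2 * c ^ j * (a j ^ 2 * a (j + 1)) * a (j + 1) ^ 2 := by ring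
      _ ≤ 2 * c ^ j * c * a (j + 1) ^ 2 := by gcongr; exact hc j
      _ = 2 * c ^ (j + 1) * a (j + 1) ^ 2 := by ring

lemma prod_le_two_mul_pow_of_sq_mul_succ_le {a : ℕ → ℝ} {s : ℝ} (hs : 1 ≤ s) (ha₀ : ∀ i, 0 ≤ a i)
    (ha₂ : ∀ i, a i ≤ 2) (hc : ∀ i, a i ^ 2 * a (i + 1) ≤ s ^ 3) (j : ℕ) :
    ∏ i ∈ range j, a i ≤ 2 * s ^ j := by
  rcases j with _ | j
  · norm_num
  have hcube : (∏ i ∈ range (j + 1), a i) ^ 3 ≤ (2 * s ^ j) ^ 3 :=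
    calc (∏ i ∈ range (j + 1), a i) ^ 3 ≤ 2 * (s ^ 3) ^ j * a j ^ 2 :=
          prod_cube_le_of_sq_mul_succ_le ha₀ ha₂ hc j
      _ ≤ 2 * (s ^ 3) ^ j * 2 ^ 2 := by gcongr; exacts [ha₀ j, ha₂ j]
      _ = (2 * s ^ j) ^ 3 := by ring
  calc ∏ i ∈ range (j + 1), a i ≤ 2 * s ^ j :=
        le_of_pow_le_pow_left₀ three_ne_zero (by positivity) hcube
    _ ≤ 2 * s ^ (j + 1) := mul_le_mul_of_nonneg_left (pow_le_pow_right₀ hs j.le_succ) zero_le_two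

lemma norm_one_sub_sq_mul_norm_one_sub_sq_le {z : ℂ} (hz : ‖z‖ = 1) :
    ‖1 - z‖ ^ 2 * ‖1 - z ^ 2‖ ≤ √3 ^ 3 := by
  have hnormSq : Complex.normSq z = 1 := by rw [Complex.normSq_eq_norm_sq, hz, one_pow]
  have hminus : ‖1 - z‖ ^ 2 = 2 - 2 * z.re := by
    rw [← Complex.normSq_eq_norm_sq, Complex.normSq_sub, hnormSq]
    simp only [map_one, one_mul, Complex.conj_re]; ring
  have hplus : ‖1 + z‖ ^ 2 = 2 + 2 * z.re := by
    rw [← Complex.normSq_eq_norm_sq, Complex.normSq_add, hnormSq]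
    simp only [map_one, one_mul, Complex.conj_re]; ring
  have hfactor : ‖1 - z ^ 2‖ = ‖1 - z‖ * ‖1 + z‖ := by
    rw [← norm_mul]; ring_nf
  have hsq : (‖1 - z‖ ^ 2 * ‖1 - z ^ 2‖) ^ 2 ≤ (√3 ^ 3) ^ 2 := by
    calc (‖1 - z‖ ^ 2 * ‖1 - z ^ 2‖) ^ 2 = (‖1 - z‖ ^ 2) ^ 3 * ‖1 + z‖ ^ 2 := by
          rw [hfactor]; ring
      _ = (2 - 2 * z.re) ^ 3 * (2 + 2 * z.re) := by rw [hminus, hplus]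
      -- `27 - (2 - t)³ (2 + t) = (t + 1)² ((t - 3)² + 2)`
      _ ≤ 27 := by
        nlinarith [mul_nonneg (sq_nonneg (2 * z.re + 1))
          (add_nonneg (sq_nonneg (2 * z.re - 3)) zero_le_two)]
      _ = (√3 ^ 3) ^ 2 := by rw [← pow_mul, mul_comm, pow_mul, sq_sqrt zero_le_three]; norm_num
  exact le_of_pow_le_pow_left₀ two_ne_zero (by positivity) hsq

lemma sum_range_sqrt_three_pow_le (k : ℕ) : ∑ j ∈ range (k + 1), √3 ^ j ≤ 3 * √3 ^ k := by
  have h₃ : (3 : ℝ) ≤ 2 * √3 := by nlinarith [sq_sqrt zero_le_three, sqrt_nonneg 3]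
  induction k with
  | zero => norm_num
  | succ k ih =>
    rw [sum_range_succ, pow_succ]
    nlinarith [pow_nonneg (sqrt_nonneg 3) k]

lemma two_rpow_log_three_div_log_four : (2 : ℝ) ^ (log 3 / log 4) = √3 := by
  rw [sqrt_eq_rpow, rpow_def_of_pos two_pos, rpow_def_of_pos three_pos,
    show (4 : ℝ) = 2 ^ 2 by norm_num, log_pow]
  congr 1
  field_simp
  ring

lemma sqrt_three_pow_le_rpow {k : ℕ} {x : ℝ} (hx : 2 ^ k ≤ x) :
    √3 ^ k ≤ x ^ (log 3 / log 4) := by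
  rw [← two_rpow_log_three_div_log_four, rpow_pow_comm zero_le_two]
  exact rpow_le_rpow (by positivity) hx
    (div_nonneg (log_nonneg (by norm_num)) (log_nonneg (by norm_num)))

lemma norm_thueMorsePoly_two_pow_le {z : ℂ} (hz : ‖z‖ = 1) (j : ℕ) :
    ‖thueMorsePoly (2 ^ j) z‖ ≤ 2 * √3 ^ j := by
  have hz_pow (i : ℕ) : ‖z ^ 2 ^ i‖ = 1 := by rw [norm_pow, hz, one_pow]
  rw [thueMorsePoly_two_pow, norm_prod]
  refine prod_le_two_mul_pow_of_sq_mul_succ_le (one_le_sqrt.2 (by norm_num)) (fun _ ↦ norm_nonneg _)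
    (fun i ↦ (norm_sub_le _ _).trans (by rw [norm_one, hz_pow]; norm_num)) (fun i ↦ ?_) j
  simpa [← pow_mul, ← pow_succ] using norm_one_sub_sq_mul_norm_one_sub_sq_le (hz_pow i)

lemma norm_thueMorsePoly_le {z : ℂ} (hz : ‖z‖ = 1) {N k : ℕ} (hN : N ≤ 2 ^ k) :
    ‖thueMorsePoly N z‖ ≤ 6 * √3 ^ k :=
  calc ‖thueMorsePoly N z‖ ≤ ∑ j ∈ range (k + 1), ‖thueMorsePoly (2 ^ j) z‖ :=
        norm_thueMorsePoly_le_sum hz.le hN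
    _ ≤ ∑ j ∈ range (k + 1), 2 * √3 ^ j := sum_le_sum fun j _ ↦ norm_thueMorsePoly_two_pow_le hz j
    _ ≤ 6 * √3 ^ k := by
        rw [← mul_sum]; linarith [sum_range_sqrt_three_pow_le k]

lemma sum_Icc_one_eq_thueMorsePoly_sub_one (m : ℕ) (z : ℂ) :
    ∑ n ∈ Icc 1 m, eps n * z ^ n = thueMorsePoly (m + 1) z - 1 := by
  rw [thueMorsePoly, sum_range_eq_add_Ico _ m.succ_pos, Nat.succ_eq_add_one,
    Ico_add_one_right_eq_Icc]
  simp

theorem eps_exp_sum_bound :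
    ∃ C > (0 : ℝ), ∀ α X : ℝ, 2 ≤ X →
      ‖∑ n ∈ Finset.Icc 1 ⌊X⌋₊, eps n * Complex.exp (2 * Real.pi * Complex.I * α * n)‖ ≤
        C * X ^ (Real.log 3 / Real.log 4) * Real.log X := by
  refine ⟨12 / log 2, by positivity, fun α X hX ↦ ?_⟩
  set z := Complex.exp ((2 * π * α : ℝ) * Complex.I)
  have hz : ‖z‖ = 1 := Complex.norm_exp_ofReal_mul_I _
  have hterm (n : ℕ) : Complex.exp (2 * π * Complex.I * α * n) = z ^ n := by
    rw [← Complex.exp_nat_mul]; push_cast; ring_nf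
  set m := ⌊X⌋₊
  set k := Nat.log 2 m
  have hm : m ≠ 0 := (Nat.floor_pos.2 (by linarith)).ne'
  have hkm : (2 : ℝ) ^ k ≤ m := by exact_mod_cast Nat.pow_log_le_self 2 hm
  have hkX : (2 : ℝ) ^ k ≤ X := hkm.trans (Nat.floor_le (by linarith))
  have hpoly : ‖thueMorsePoly (m + 1) z‖ ≤ 6 * √3 ^ (k + 1) :=
    norm_thueMorsePoly_le hz (Nat.lt_pow_succ_log_self one_lt_two m)
  have hsqrt : √3 ≤ 11 / 6 := by rw [sqrt_le_left] <;> norm_num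
  calc ‖∑ n ∈ Icc 1 m, eps n * Complex.exp (2 * π * Complex.I * α * n)‖
      = ‖thueMorsePoly (m + 1) z - 1‖ := by simp_rw [hterm, sum_Icc_one_eq_thueMorsePoly_sub_one]
    _ ≤ ‖thueMorsePoly (m + 1) z‖ + 1 := by simpa using norm_sub_le (thueMorsePoly (m + 1) z) 1
    _ ≤ 12 * √3 ^ k := by
        have hpow : 1 ≤ √3 ^ k := one_le_pow₀ (one_le_sqrt.2 (by norm_num))
        nlinarith [pow_succ √3 k]
    _ ≤ 12 * X ^ (log 3 / log 4) := by gcongr; exact sqrt_three_pow_le_rpow hkX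
    _ ≤ 12 / log 2 * X ^ (log 3 / log 4) * log X := by
        have hlog : log 2 ≤ log X := log_le_log two_pos hX
        rw [div_mul_eq_mul_div, div_mul_eq_mul_div, le_div_iff₀ (log_pos one_lt_two)]
        gcongr
end

section
/- For every positive integer Q, ∫_0^1 |∏_{r=0}^{2Q−1} (1 − e^{2πiα·2^r})| dα ≤ 2^{Qθ₀}, where θ₀ = log₂ √(2 + √2). -/
/-!
Write `P_n(α) = ∏_{r<n} f(2^r α)` with `f(t) = |1 - e(t)| = 2 |sin πt|`. Peeling off two factors,
`P_{2n+2}(α) = f(α) f(2α) P_{2n}(4α)`. As `P_{2n}` has period 1, substituting `y = 4α` and folding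
`[0, 4]` onto `[0, 1]` gives `∫ P_{2n+2} = ¼ ∫₀¹ (∑_{k<4} f((y+k)/4) f((y+k)/2)) P_{2n}(y) dy`.
With `a = πy/4 ∈ [0, π/4]` the bracket is `4 (sin 2a (sin a + cos a) + √2 cos a cos 2a)
= 4√2 (cos(π/8) cos(a - π/8) + sin(π/8) sin(3a + π/8)) ≤ 4√2 (cos(π/8) + sin(π/8)) = 4√(2+√2)`,
so each step costs a factor `√(2+√2) = 2^θ₀`.
-/

open Real Finset Function

theorem intervalIntegral_mul_comp_nat_mul {g h : ℝ → ℝ} (hg : Periodic g 1) (hgc : Continuous g)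
    (hhc : Continuous h) {m : ℕ} (hm : m ≠ 0) :
    ∫ x in (0 : ℝ)..1, h x * g (m * x) =
      (m : ℝ)⁻¹ * ∫ x in (0 : ℝ)..1, (∑ k ∈ range m, h ((x + k) / m)) * g x := by
  set F : ℝ → ℝ := fun y ↦ h (y / m) * g y
  have hF : Continuous F := by fun_prop
  have hm' : (m : ℝ) ≠ 0 := Nat.cast_ne_zero.mpr hm
  have hpiece (k : ℕ) : ∫ y in (k : ℝ)..(k + 1 : ℕ), F y =
      ∫ x in (0 : ℝ)..1, h ((x + k) / m) * g x := by
    have := intervalIntegral.integral_comp_add_right F (a := 0) (b := 1) (k : ℝ)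
    rw [zero_add, add_comm] at this
    rw [Nat.cast_succ, ← this]
    have hgk (x : ℝ) : g (x + k) = g x := by simpa only [mul_one] using hg.nat_mul k x
    simp only [F, hgk]
  calc ∫ x in (0 : ℝ)..1, h x * g (m * x)
      = ∫ x in (0 : ℝ)..1, F (m * x) := by simp only [F, mul_div_cancel_left₀ _ hm']
    _ = (m : ℝ)⁻¹ * ∑ k ∈ range m, ∫ y in (k : ℝ)..(k + 1 : ℕ), F y := by
      rw [intervalIntegral.integral_comp_mul_left _ hm', smul_eq_mul, mul_zero, mul_one,
        intervalIntegral.sum_integral_adjacent_intervals fun k _ ↦ hF.intervalIntegrable _ _,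
        Nat.cast_zero]
    _ = _ := by
      simp only [hpiece, Finset.sum_mul]
      rw [intervalIntegral.integral_finsetSum fun k _ ↦
        (by fun_prop : Continuous _).intervalIntegrable _ _]

noncomputable def dyadicProd (f : ℝ → ℝ) (n : ℕ) (α : ℝ) : ℝ := ∏ r ∈ range n, f (2 ^ r * α)

namespace dyadicProd

variable {f : ℝ → ℝ}

theorem continuous (hf : Continuous f) (n : ℕ) : Continuous (dyadicProd f n) := by
  unfold dyadicProd; fun_prop

theorem periodic (hf : Periodic f 1) (n : ℕ) : Periodic (dyadicProd f n) 1 := fun α ↦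
  prod_congr rfl fun r _ ↦ by
    simpa only [mul_add, mul_one, Nat.cast_pow, Nat.cast_ofNat] using hf.nat_mul (2 ^ r) _

theorem nonneg (hf : ∀ x, 0 ≤ f x) (n : ℕ) (α : ℝ) : 0 ≤ dyadicProd f n α :=
  prod_nonneg fun _ _ ↦ hf _

theorem add_two (n : ℕ) (α : ℝ) :
    dyadicProd f (n + 2) α = f α * f (2 * α) * dyadicProd f n (4 * α) := by
  simp only [dyadicProd, prod_range_succ', pow_succ, pow_zero, one_mul]
  ring_nf

theorem integral_add_two_le (hf : Periodic f 1) (hfc : Continuous f) (hf0 : ∀ x, 0 ≤ f x) {c : ℝ}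
    (hc : ∀ x ∈ Set.Icc (0 : ℝ) 1, ∑ k ∈ range 4, f ((x + k) / 4) * f ((x + k) / 2) ≤ 4 * c)
    (n : ℕ) :
    ∫ α in (0 : ℝ)..1, dyadicProd f (n + 2) α ≤ c * ∫ α in (0 : ℝ)..1, dyadicProd f n α := by
  have hP := continuous hfc n
  calc ∫ α in (0 : ℝ)..1, dyadicProd f (n + 2) α
      = ∫ α in (0 : ℝ)..1, f α * f (2 * α) * dyadicProd f n ((4 : ℕ) * α) := by
        simp only [add_two, Nat.cast_ofNat]
    _ = (4 : ℝ)⁻¹ * ∫ x in (0 : ℝ)..1,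
          (∑ k ∈ range 4, f ((x + k) / 4) * f ((x + k) / 2)) * dyadicProd f n x := by
        rw [intervalIntegral_mul_comp_nat_mul (periodic hf n) hP (by fun_prop) four_ne_zero]
        congr 1
        push_cast
        ring_nf
    _ ≤ (4 : ℝ)⁻¹ * ∫ x in (0 : ℝ)..1, 4 * c * dyadicProd f n x := by
        gcongr
        refine intervalIntegral.integral_mono_on zero_le_one ?_ ?_ fun x hx ↦ ?_
        · exact (by fun_prop : Continuous _).intervalIntegrable _ _
        · exact (by fun_prop : Continuous _).intervalIntegrable _ _
        · exact mul_le_mul_of_nonneg_right (hc x hx) (nonneg hf0 n x)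
    _ = c * ∫ α in (0 : ℝ)..1, dyadicProd f n α := by
        rw [intervalIntegral.integral_const_mul]; ring

theorem integral_two_mul_le (hf : Periodic f 1) (hfc : Continuous f) (hf0 : ∀ x, 0 ≤ f x) {c : ℝ}
    (hc : ∀ x ∈ Set.Icc (0 : ℝ) 1, ∑ k ∈ range 4, f ((x + k) / 4) * f ((x + k) / 2) ≤ 4 * c)
    (n : ℕ) :
    ∫ α in (0 : ℝ)..1, dyadicProd f (2 * n) α ≤ c ^ n := by
  have hc0 : 0 ≤ c := by
    have := hc 0 (Set.left_mem_Icc.mpr zero_le_one)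
    have := sum_nonneg fun k (_ : k ∈ range 4) ↦
      mul_nonneg (hf0 ((0 + k) / 4)) (hf0 ((0 + k) / 2))
    linarith
  induction n with
  | zero => simp [dyadicProd]
  | succ n ih =>
    calc ∫ α in (0 : ℝ)..1, dyadicProd f (2 * (n + 1)) α
        ≤ c * ∫ α in (0 : ℝ)..1, dyadicProd f (2 * n) α := integral_add_two_le hf hfc hf0 hc _
      _ ≤ c ^ (n + 1) := by rw [pow_succ']; gcongr

end dyadicProd

noncomputable def chord (t : ℝ) : ℝ := ‖1 - Complex.exp (2 * π * Complex.I * t)‖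

theorem chord_eq (t : ℝ) : chord t = 2 * |sin (π * t)| := by
  rw [chord, norm_sub_rev,
    show 2 * (π : ℂ) * Complex.I * t = Complex.I * ((2 * π * t : ℝ) : ℂ) by push_cast; ring,
    Complex.norm_exp_I_mul_ofReal_sub_one, norm_mul, Real.norm_eq_abs, Real.norm_eq_abs,
    abs_two, show 2 * π * t / 2 = π * t by ring]

theorem chord_eq_of_mem_Icc {t : ℝ} (ht : t ∈ Set.Icc (0 : ℝ) 1) : chord t = 2 * sin (π * t) := by
  rw [chord_eq, abs_of_nonneg (sin_nonneg_of_nonneg_of_le_pi (by nlinarith [pi_pos, ht.1])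
    (by nlinarith [pi_pos, ht.2]))]

theorem continuous_chord : Continuous chord := by
  unfold chord; fun_prop

theorem chord_periodic : Periodic chord 1 := fun t ↦ by
  rw [chord_eq, chord_eq, mul_add, mul_one, sin_add_pi, abs_neg]

theorem chord_nonneg (t : ℝ) : 0 ≤ chord t := norm_nonneg _

theorem sin_two_mul_mul_add_sqrt_two_mul_cos_two_mul_le (a : ℝ) :
    sin (2 * a) * (sin a + cos a) + √2 * cos a * cos (2 * a) ≤ √(2 + √2) := by
  have hsq : sin (π / 8) ^ 2 + cos (π / 8) ^ 2 = 1 := sin_sq_add_cos_sq _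
  have huv : 2 * sin (π / 8) * cos (π / 8) = √2 / 2 := by
    rw [← sin_two_mul, show 2 * (π / 8) = π / 4 by ring, sin_pi_div_four]
  have hvu : cos (π / 8) ^ 2 - sin (π / 8) ^ 2 = √2 / 2 := by
    rw [← cos_two_mul', show 2 * (π / 8) = π / 4 by ring, cos_pi_div_four]
  have hu : 0 ≤ sin (π / 8) := sin_nonneg_of_nonneg_of_le_pi (by positivity) (by linarith [pi_pos])
  have hv : 0 ≤ cos (π / 8) := cos_nonneg_of_mem_Icc ⟨by linarith [pi_pos], by linarith [pi_pos]⟩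
  set u := sin (π / 8)
  set v := cos (π / 8)
  have hk : √2 ^ 2 = 2 := sq_sqrt zero_le_two
  have hshift : sin (2 * a) * (sin a + cos a) + √2 * cos a * cos (2 * a) =
      √2 * (v * cos (a - π / 8) + u * sin (3 * a + π / 8)) := by
    rw [cos_sub, sin_add, sin_three_mul, cos_three_mul, sin_two_mul, cos_two_mul']
    linear_combination (2 * sin a + 2 * cos a - √2 * cos a) * sin_sq_add_cos_sq a
      - (sin a - sin a ^ 3 - cos a ^ 3 + cos a) * hk
      - √2 * cos a * (hsq + hvu) / 2 - (2 * √2 * sin a - 2 * √2 * sin a ^ 3) * huv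
      - (4 * √2 * cos a ^ 3 - 3 * √2 * cos a) * (hsq - hvu) / 2
  have hamp : √2 * (u + v) = √(2 + √2) := by
    rw [show 2 + √2 = (√2 * (u + v)) ^ 2 by
      linear_combination (-(u + v) ^ 2) * hk - 2 * hsq - 2 * huv, sqrt_sq (by positivity)]
  rw [hshift, ← hamp]
  refine mul_le_mul_of_nonneg_left ?_ (sqrt_nonneg 2)
  linarith [mul_le_mul_of_nonneg_left (cos_le_one (a - π / 8)) hv,
    mul_le_mul_of_nonneg_left (sin_le_one (3 * a + π / 8)) hu]

theorem sum_chord_mul_chord_le {x : ℝ} (hx : x ∈ Set.Icc (0 : ℝ) 1) :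
    ∑ k ∈ range 4, chord ((x + k) / 4) * chord ((x + k) / 2) ≤ 4 * √(2 + √2) := by
  obtain ⟨hx0, hx1⟩ := hx
  have hmem {k d : ℝ} (hk : 0 ≤ k) (hkd : k + 1 ≤ d) : (x + k) / d ∈ Set.Icc (0 : ℝ) 1 :=
    ⟨div_nonneg (by linarith) (by linarith), (div_le_one (by linarith)).mpr (by linarith)⟩
  simp only [sum_range_succ, range_zero, sum_empty, Nat.cast_zero, Nat.cast_one, Nat.cast_ofNat,
    zero_add]
  -- fold `(x + 2) / 2` and `(x + 3) / 2` back into `[0, 1]`, where `chord` is `2 sin (π ·)`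
  rw [show (x + 2) / 2 = (x + 0) / 2 + 1 by ring, show (x + 3) / 2 = (x + 1) / 2 + 1 by ring,
    chord_periodic, chord_periodic]
  rw [chord_eq_of_mem_Icc (hmem le_rfl (by norm_num : (0 : ℝ) + 1 ≤ 4)),
    chord_eq_of_mem_Icc (hmem le_rfl (by norm_num : (0 : ℝ) + 1 ≤ 2)),
    chord_eq_of_mem_Icc (hmem zero_le_one (by norm_num : (1 : ℝ) + 1 ≤ 4)),
    chord_eq_of_mem_Icc (hmem zero_le_one (by norm_num : (1 : ℝ) + 1 ≤ 2)),
    chord_eq_of_mem_Icc (hmem zero_le_two (by norm_num : (2 : ℝ) + 1 ≤ 4)),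
    chord_eq_of_mem_Icc (hmem (by norm_num) (by norm_num : (3 : ℝ) + 1 ≤ 4))]
  set a := π * x / 4
  rw [show π * ((x + 0) / 4) = a by ring, show π * ((x + 0) / 2) = 2 * a by ring,
    show π * ((x + 1) / 4) = a + π / 4 by ring, show π * ((x + 1) / 2) = 2 * a + π / 2 by ring,
    show π * ((x + 2) / 4) = a + π / 2 by ring,
    show π * ((x + 3) / 4) = a + π / 4 + π / 2 by ring]
  simp only [sin_add_pi_div_two]
  have hsin_add_cos : sin (a + π / 4) + cos (a + π / 4) = √2 * cos a := by
    rw [sin_add, cos_add, sin_pi_div_four, cos_pi_div_four]; ring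
  linear_combination
    4 * sin_two_mul_mul_add_sqrt_two_mul_cos_two_mul_le a + 4 * cos (2 * a) * hsin_add_cos

theorem integral_product_bound_general (Q : ℕ) :
    (∫ α in (0:ℝ)..1,
        ‖∏ r ∈ Finset.range (2 * Q),
            (1 - Complex.exp (2 * Real.pi * Complex.I * α * 2 ^ r))‖) ≤
      (2 : ℝ) ^ ((Q : ℝ) * Real.logb 2 (Real.sqrt (2 + Real.sqrt 2))) := by
  have hnorm (α : ℝ) : ‖∏ r ∈ range (2 * Q), (1 - Complex.exp (2 * π * Complex.I * α * 2 ^ r))‖ =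
      dyadicProd chord (2 * Q) α := by
    rw [norm_prod]
    refine prod_congr rfl fun r _ ↦ ?_
    rw [chord]
    push_cast
    ring_nf
  have hpow : (2 : ℝ) ^ ((Q : ℝ) * logb 2 √(2 + √2)) = √(2 + √2) ^ Q := by
    rw [mul_comm, rpow_mul zero_le_two, rpow_logb two_pos (by norm_num) (by positivity),
      rpow_natCast]
  simp only [hnorm, hpow]
  exact dyadicProd.integral_two_mul_le chord_periodic continuous_chord chord_nonneg
    (fun _ hx ↦ sum_chord_mul_chord_le hx) Q

theorem integral_product_bound (Q : ℕ) (hQ : 1 ≤ Q) :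
    (∫ α in (0:ℝ)..1,
        ‖∏ r ∈ Finset.range (2 * Q),
            (1 - Complex.exp (2 * Real.pi * Complex.I * α * 2 ^ r))‖) ≤
      (2 : ℝ) ^ ((Q : ℝ) * Real.logb 2 (Real.sqrt (2 + Real.sqrt 2))) :=
  integral_product_bound_general Q
end

section
/- Let α = a/q + θ/q² with integers a, q, (a, q) = 1, q ≥ 1, and |θ| ≤ 1. Then for every real β, every real U > 0, and every integer P ≥ 1, one has ∑_{x=1}^{P} min(U, ‖αx + β‖^{−1}) ≤ 6 (P/q + 1)(U + q log q), where ‖t‖ denotes the distance from the real number t to the nearest integer, with the convention that min(U, ‖t‖^{−1}) = U when ‖t‖ = 0. -/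
/-!
Cut `1, …, P` into at most `P / q + 1` blocks of `q` consecutive integers `s + z`, `z < q`.
With `b = ⌊q (α s + β)⌋`, one has `α (s + z) + β = m + (j + δ) / q + θ z / q²` where
`j ≡ a z + b (mod q)`, `0 ≤ j < q` and `0 ≤ δ < 1`, so
`‖α (s + z) + β‖ ≥ (min(j, q - 1 - j) - 1) / q`. As `a` is coprime to `q`, the residues `j`
are distinct, so each `k = min(j, q - 1 - j)` occurs at most twice and a block contributes at
most `2 (2U + ∑_{2 ≤ k < q} q / (k - 1))`, a harmonic sum bounded by `6 (U + q log q)`.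
-/

/-- `distNearestInt t` is the distance from the real number `t` to the nearest integer. -/
noncomputable def distNearestInt (t : ℝ) : ℝ := |t - round t|

open Finset Real

lemma distNearestInt_nonneg (t : ℝ) : 0 ≤ distNearestInt t := abs_nonneg _

lemma distNearestInt_intCast_add (m : ℤ) (t : ℝ) :
    distNearestInt (m + t) = distNearestInt t := by
  simp only [distNearestInt, round_intCast_add, Int.cast_add]
  ring_nf

lemma distNearestInt_le_add_abs_sub (u v : ℝ) :
    distNearestInt u ≤ distNearestInt v + |u - v| :=
  calc distNearestInt u ≤ |u - round v| := round_le u (round v)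
    _ = |(v - round v) + (u - v)| := by ring_nf
    _ ≤ distNearestInt v + |u - v| := abs_add_le _ _

lemma distNearestInt_eq_min_of_mem_Ico {t : ℝ} (ht : t ∈ Set.Ico 0 1) :
    distNearestInt t = min t (1 - t) := by
  rw [distNearestInt, abs_sub_round_eq_min, Int.fract_eq_self.mpr ht]

lemma min_div_le_distNearestInt {q j : ℕ} (hj : j < q) {δ : ℝ} (hδ : δ ∈ Set.Ico 0 1) :
    ((min j (q - 1 - j) : ℕ) : ℝ) / q ≤ distNearestInt ((j + δ) / q) := by
  have hq : (0 : ℝ) < q := by exact_mod_cast Nat.zero_lt_of_lt hj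
  have hjq : (j : ℝ) + 1 ≤ q := by exact_mod_cast hj
  have hcast : ((q - 1 - j : ℕ) : ℝ) = q - 1 - j := by
    rw [Nat.cast_sub (by omega), Nat.cast_sub (by omega), Nat.cast_one]
  obtain ⟨hδ0, hδ1⟩ := hδ
  rw [distNearestInt_eq_min_of_mem_Ico ⟨by positivity, (div_lt_one hq).2 (by linarith)⟩,
    Nat.cast_min, hcast, ← min_div_div_right hq.le, one_sub_div hq.ne']
  exact min_le_min (div_le_div_of_nonneg_right (by linarith) hq.le)
    (div_le_div_of_nonneg_right (by linarith) hq.le)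

lemma min_sub_one_div_le_distNearestInt {α θ γ : ℝ} {a : ℤ} {q z j : ℕ}
    (hα : α = a / q + θ / q ^ 2) (hθ : |θ| ≤ 1) (hz : z ≤ q) (hj : j < q)
    (hmod : (j : ℤ) ≡ a * z + ⌊(q : ℝ) * γ⌋ [ZMOD q]) :
    (((min j (q - 1 - j) : ℕ) : ℝ) - 1) / q ≤ distNearestInt (γ + α * z) := by
  have hq : (0 : ℝ) < q := by exact_mod_cast Nat.zero_lt_of_lt hj
  obtain ⟨m, hm⟩ := hmod.dvd
  set δ := Int.fract ((q : ℝ) * γ)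
  have hγ : (q : ℝ) * γ = ⌊(q : ℝ) * γ⌋ + δ := (Int.floor_add_fract _).symm
  have hm' : (a : ℝ) * z + ⌊(q : ℝ) * γ⌋ - j = q * m := by exact_mod_cast hm
  have hrepr : γ + α * z = m + ((j + δ) / q + θ * z / q ^ 2) := by
    rw [hα]
    field_simp
    linear_combination (q : ℝ) * hγ + (q : ℝ) * hm'
  have herr : |θ * z / q ^ 2| ≤ 1 / q := by
    have hzq : (z : ℝ) ≤ q := by exact_mod_cast hz
    rw [abs_div, abs_mul, Nat.abs_cast, abs_of_pos (pow_pos hq 2),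
      div_le_div_iff₀ (pow_pos hq 2) hq]
    calc |θ| * z * q ≤ 1 * q * q := by gcongr
      _ = 1 * q ^ 2 := by ring
  calc (((min j (q - 1 - j) : ℕ) : ℝ) - 1) / q
      = ((min j (q - 1 - j) : ℕ) : ℝ) / q - 1 / q := sub_div _ _ _
    _ ≤ distNearestInt ((j + δ) / q) - |θ * z / q ^ 2| :=
        sub_le_sub (min_div_le_distNearestInt hj ⟨Int.fract_nonneg _, Int.fract_lt_one _⟩) herr
    _ ≤ distNearestInt ((j + δ) / q + θ * z / q ^ 2) := by
        have := distNearestInt_le_add_abs_sub ((j + δ) / q) ((j + δ) / q + θ * z / q ^ 2)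
        rw [sub_add_cancel_left, abs_neg] at this
        linarith
    _ = distNearestInt (γ + α * z) := by rw [hrepr, distNearestInt_intCast_add]

/-- `min U d⁻¹`, read as `U` at `d = 0` (where Lean's `0⁻¹ = 0` would give `min U 0`). -/
noncomputable def truncInv (U d : ℝ) : ℝ := if d = 0 then U else min U d⁻¹

lemma truncInv_nonneg {U d : ℝ} (hU : 0 ≤ U) (hd : 0 ≤ d) : 0 ≤ truncInv U d := by
  unfold truncInv
  split_ifs
  exacts [hU, le_min hU (inv_nonneg.2 hd)]

lemma truncInv_le_left (U d : ℝ) : truncInv U d ≤ U := by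
  unfold truncInv
  split_ifs
  exacts [le_rfl, min_le_left _ _]

lemma truncInv_le_inv_of_le {U c d : ℝ} (hc : 0 < c) (hcd : c ≤ d) :
    truncInv U d ≤ c⁻¹ := by
  rw [truncInv, if_neg (hc.trans_le hcd).ne']
  exact (min_le_right _ _).trans (inv_anti₀ hc hcd)

noncomputable def distWeight (U : ℝ) (q k : ℕ) : ℝ :=
  if k ≤ 1 then U else q / ((k : ℝ) - 1)

lemma distWeight_nonneg {U : ℝ} (hU : 0 ≤ U) (q k : ℕ) : 0 ≤ distWeight U q k := by
  unfold distWeight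
  split_ifs with hk
  · exact hU
  · have : (2 : ℝ) ≤ k := by exact_mod_cast (by omega : 2 ≤ k)
    exact div_nonneg (Nat.cast_nonneg q) (by linarith)

lemma truncInv_le_distWeight {U d : ℝ} {q k : ℕ} (hq : 0 < q)
    (hd : ((k : ℝ) - 1) / q ≤ d) :
    truncInv U d ≤ distWeight U q k := by
  unfold distWeight
  split_ifs with hk
  · exact truncInv_le_left U d
  · have : (2 : ℝ) ≤ k := by exact_mod_cast (by omega : 2 ≤ k)
    rw [← inv_div]
    exact truncInv_le_inv_of_le (div_pos (by linarith) (by exact_mod_cast hq)) hd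

lemma sum_distWeight_le {U : ℝ} (hU : 0 ≤ U) {q : ℕ} (hq : 0 < q) :
    ∑ k ∈ range q, distWeight U q k ≤ 3 * (U + q * log q) := by
  obtain ⟨n, rfl⟩ | ⟨n, rfl⟩ : q = 1 ∨ ∃ n, q = n + 2 := by
    rcases q with _ | _ | n <;> simp_all
  · simp [distWeight]
    linarith
  · have hq : (2 : ℝ) ≤ (n + 2 : ℕ) := by simp
    have hharm : ∑ i ∈ range n, distWeight U (n + 2) (i + 1 + 1) =
        (n + 2 : ℕ) * (harmonic n : ℝ) := by
      simp only [distWeight, harmonic, Rat.cast_sum, mul_sum]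
      refine sum_congr rfl fun i _ => ?_
      rw [if_neg (by omega)]
      push_cast
      ring
    have hlog : (harmonic n : ℝ) ≤ 1 + log (n + 2 : ℕ) :=
      (harmonic_le_one_add_log n).trans <| by
        rcases n.eq_zero_or_pos with rfl | hn
        · simpa using log_nonneg one_le_two
        · gcongr; simp
    have hlog2 : 1 / 2 ≤ log (n + 2 : ℕ) :=
      (by linarith [log_two_gt_d9] : (1 : ℝ) / 2 ≤ log 2).trans (log_le_log two_pos hq)
    rw [sum_range_succ', sum_range_succ', hharm]
    simp only [distWeight, zero_add, le_refl, zero_le_one, if_true]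
    nlinarith

lemma injOn_toNat_emod {a : ℤ} {q : ℕ} (ha : IsCoprime a q) (b : ℤ) :
    Set.InjOn (fun z : ℕ => ((a * z + b) % q).toNat) (range q) := by
  intro z₁ hz₁ z₂ hz₂ h
  have hq : (q : ℤ) ≠ 0 := by simp at hz₁; omega
  have hmod : (a * z₁ + b) % q = (a * z₂ + b) % q := by
    simpa only [Int.toNat_of_nonneg (Int.emod_nonneg _ hq)] using
      congrArg (fun n : ℕ => (n : ℤ)) h
  have hdvd : (q : ℤ) ∣ a * ((z₂ : ℤ) - z₁) := by
    simpa only [mul_sub, add_sub_add_right_eq_sub] using Int.ModEq.dvd hmod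
  have hz : z₁ ≡ z₂ [MOD q] :=
    Int.natCast_modEq_iff.1 (Int.modEq_iff_dvd.2 (ha.symm.dvd_of_dvd_mul_left hdvd))
  exact hz.eq_of_lt_of_lt (mem_range.1 hz₁) (mem_range.1 hz₂)

lemma sum_min_reflect_le {q : ℕ} {J : ℕ → ℕ} (hJ : ∀ z ∈ range q, J z ∈ range q)
    (hinj : Set.InjOn J (range q)) {G : ℕ → ℝ} (hG : ∀ k, 0 ≤ G k) :
    ∑ z ∈ range q, G (min (J z) (q - 1 - J z)) ≤ 2 * ∑ k ∈ range q, G k :=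
  calc ∑ z ∈ range q, G (min (J z) (q - 1 - J z))
      ≤ ∑ z ∈ range q, (G (J z) + G (q - 1 - J z)) := by
        refine sum_le_sum fun z _ => ?_
        rcases min_choice (J z) (q - 1 - J z) with h | h <;> rw [h] <;>
          linarith [hG (J z), hG (q - 1 - J z)]
    _ = ∑ k ∈ (range q).image J, (G k + G (q - 1 - k)) :=
        (sum_image (f := fun k => G k + G (q - 1 - k)) hinj).symm
    _ ≤ ∑ k ∈ range q, (G k + G (q - 1 - k)) :=
        sum_le_sum_of_subset_of_nonneg (image_subset_iff.2 hJ) fun k _ _ =>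
          add_nonneg (hG _) (hG _)
    _ = 2 * ∑ k ∈ range q, G k := by rw [sum_add_distrib, sum_range_reflect]; ring

lemma sum_truncInv_range_le {α θ U : ℝ} {a : ℤ} {q : ℕ} (hq : 0 < q) (ha : IsCoprime a q)
    (hα : α = a / q + θ / q ^ 2) (hθ : |θ| ≤ 1) (hU : 0 ≤ U) (γ : ℝ) :
    ∑ z ∈ range q, truncInv U (distNearestInt (γ + α * z)) ≤ 6 * (U + q * log q) := by
  set J := fun z : ℕ => ((a * z + ⌊(q : ℝ) * γ⌋) % q).toNat
  have hJmod (z : ℕ) : (J z : ℤ) ≡ a * z + ⌊(q : ℝ) * γ⌋ [ZMOD q] := by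
    rw [Int.toNat_of_nonneg (Int.emod_nonneg _ (by omega))]
    exact Int.mod_modEq _ _
  have hJ : ∀ z ∈ range q, J z ∈ range q := fun z _ => by
    simp only [J, mem_range]
    have := Int.emod_lt_of_pos (a * z + ⌊(q : ℝ) * γ⌋) (by omega : (0 : ℤ) < q)
    omega
  calc ∑ z ∈ range q, truncInv U (distNearestInt (γ + α * z))
      ≤ ∑ z ∈ range q, distWeight U q (min (J z) (q - 1 - J z)) :=
        sum_le_sum fun z hz => truncInv_le_distWeight hq <|
          min_sub_one_div_le_distNearestInt hα hθ (mem_range.1 hz).le (mem_range.1 (hJ z hz))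
            (hJmod z)
    _ ≤ 2 * ∑ k ∈ range q, distWeight U q k :=
        sum_min_reflect_le hJ (injOn_toNat_emod ha _) (distWeight_nonneg hU q)
    _ ≤ 6 * (U + q * log q) := by linarith [sum_distWeight_le hU hq]

lemma sum_range_le_of_sum_block_le {f : ℕ → ℝ} (hf : ∀ x, 0 ≤ f x) {q : ℕ} (hq : 0 < q)
    {M : ℝ} (hM : ∀ s, ∑ z ∈ range q, f (s + z) ≤ M) (n s : ℕ) :
    ∑ x ∈ range n, f (s + x) ≤ (n / q + 1) * M := by
  induction n using Nat.strong_induction_on generalizing s with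
  | _ n ih =>
    have hq' : (0 : ℝ) < q := by exact_mod_cast hq
    by_cases hn : n ≤ q
    · have hM0 : 0 ≤ M := (sum_nonneg fun z _ => hf (s + z)).trans (hM s)
      calc ∑ x ∈ range n, f (s + x) ≤ ∑ x ∈ range q, f (s + x) :=
            sum_le_sum_of_subset_of_nonneg (range_subset_range.2 hn) fun x _ _ => hf _
        _ ≤ M := hM s
        _ ≤ (n / q + 1) * M :=
            le_mul_of_one_le_left hM0 (by linarith [div_nonneg (Nat.cast_nonneg n) hq'.le])
    · obtain ⟨m, rfl⟩ := Nat.exists_eq_add_of_le (not_le.1 hn).le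
      have hrest := ih m (by omega) (s + q)
      simp only [add_assoc] at hrest
      rw [sum_range_add]
      calc ∑ x ∈ range q, f (s + x) + ∑ x ∈ range m, f (s + (q + x))
          ≤ M + (m / q + 1) * M := add_le_add (hM s) hrest
        _ = ((q + m : ℕ) / q + 1) * M := by field_simp; push_cast; ring

theorem min_norm_inv_sum_bound_general (α β θ U : ℝ) (a : ℤ) (q : ℤ) (P : ℕ)
    (hq : 1 ≤ q) (hgcd : IsCoprime a q) (hα : α = a / q + θ / q ^ 2)
    (hθ : |θ| ≤ 1) (hU : 0 < U) :
    ∑ x ∈ Finset.Icc 1 P,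
        (if distNearestInt (α * x + β) = 0 then U
          else min U (distNearestInt (α * x + β))⁻¹) ≤
      6 * ((P : ℝ) / (q : ℝ) + 1) * (U + (q : ℝ) * Real.log q) := by
  lift q to ℕ using (by omega)
  simp only [Int.cast_natCast] at hα ⊢
  have hq0 : 0 < q := by omega
  have hblock (s : ℕ) :
      ∑ z ∈ range q, truncInv U (distNearestInt (α * (s + z : ℕ) + β)) ≤
        6 * (U + q * log q) := by
    refine le_of_eq_of_le (sum_congr rfl fun z _ => ?_)
      (sum_truncInv_range_le hq0 hgcd hα hθ hU.le (α * s + β))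
    congr 2
    push_cast
    ring
  have hshift : ∑ x ∈ Icc 1 P, truncInv U (distNearestInt (α * x + β)) =
      ∑ x ∈ range P, truncInv U (distNearestInt (α * (1 + x : ℕ) + β)) := by
    rw [← Ico_add_one_right_eq_Icc, sum_Ico_eq_sum_range, add_tsub_cancel_right]
  have hbound := sum_range_le_of_sum_block_le
    (fun x => truncInv_nonneg hU.le (distNearestInt_nonneg (α * x + β))) hq0 hblock P 1
  rw [← hshift] at hbound
  unfold truncInv at hbound
  linarith

theorem min_norm_inv_sum_bound (α β θ U : ℝ) (a : ℤ) (q : ℤ) (P : ℕ)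
    (hq : 1 ≤ q) (hgcd : IsCoprime a q) (hα : α = a / q + θ / q ^ 2)
    (hθ : |θ| ≤ 1) (hU : 0 < U) (hP : 1 ≤ P) :
    ∑ x ∈ Finset.Icc 1 P,
        (if distNearestInt (α * x + β) = 0 then U
          else min U (distNearestInt (α * x + β))⁻¹) ≤
      6 * ((P : ℝ) / (q : ℝ) + 1) * (U + (q : ℝ) * Real.log q) :=
  min_norm_inv_sum_bound_general α β θ U a q P hq hgcd hα hθ hU
end
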